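/- arXiv:2510.11452 — 3 statements merged into one kernel-verified Lean document; each statement's English description precedes it below -/
import Mathlib

section
/- In the two-player interconnected contest with Tullock contest success function with parameter γ ∈ (0,1], suppose m ≥ 2, c_2 ≥ c_1 > 0, and v^k = v > 0 for all k ∈ B. Let ρ_1 be the empty network (ρ_1^{l,k} = 0 for all l ≠ k) and let ρ_2 be the complete directed network with ρ_2^{l,k} = (c_2 − c_1)/((m−1) c_1) for all l ≠ k. Then the profile in which e_i^k = γ v/(4 c_i) for every player i and every battlefield k is a Nash equilibrium; in it every winning probability equals 1/2, and the total effort of player i equals m γ v/(4 c_i), which is the maximal possible equilibrium total effort of player i over all pairs of spillover networks. -/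
open Finset Matrix

/-- Effective effort of a player with spillover matrix `ρ` and effort vector `e`
at battlefield `k`: `y^k = e^k + ∑_{l ≠ k} ρ^{l,k} e^l`. -/
noncomputable def effY {m : ℕ} (ρ : Matrix (Fin m) (Fin m) ℝ) (e : Fin m → ℝ)
    (k : Fin m) : ℝ :=
  e k + ∑ l ∈ Finset.univ.erase k, ρ l k * e l

/-- Tullock contest success function with parameter `γ`.  When both effective
efforts are `0` this gives `0/0 = 0`, matching the convention. -/
noncomputable def tullock (γ y₁ y₂ : ℝ) : ℝ :=
  y₁ ^ γ / (y₁ ^ γ + y₂ ^ γ)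

/-- Payoff of player `i` in the interconnected contest. -/
noncomputable def payoff {m : ℕ} (γ : ℝ) (v : Fin m → ℝ) (c : Fin 2 → ℝ)
    (ρ : Fin 2 → Matrix (Fin m) (Fin m) ℝ) (e : Fin 2 → Fin m → ℝ) (i : Fin 2) : ℝ :=
  (∑ k, v k * tullock γ (effY (ρ i) (e i) k) (effY (ρ (1 - i)) (e (1 - i)) k))
    - c i * ∑ k, e i k

/-- Pure strategy Nash equilibrium of the interconnected contest:
nonnegative efforts, and no profitable deviation to any nonnegative effort vector. -/
def IsNashEq {m : ℕ} (γ : ℝ) (v : Fin m → ℝ) (c : Fin 2 → ℝ)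
    (ρ : Fin 2 → Matrix (Fin m) (Fin m) ℝ) (e : Fin 2 → Fin m → ℝ) : Prop :=
  (∀ i k, 0 ≤ e i k) ∧
  ∀ (i : Fin 2) (e' : Fin m → ℝ), (∀ k, 0 ≤ e' k) →
    payoff γ v c ρ (Function.update e i e') i ≤ payoff γ v c ρ e i

/-- Winning probability of player `i` at battlefield `k` under profile `e`. -/
noncomputable def eqProb {m : ℕ} (γ : ℝ) (ρ : Fin 2 → Matrix (Fin m) (Fin m) ℝ)
    (e : Fin 2 → Fin m → ℝ) (i : Fin 2) (k : Fin m) : ℝ :=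
  tullock γ (effY (ρ i) (e i) k) (effY (ρ (1 - i)) (e (1 - i)) k)

/-! Against an opponent whose effective effort on a battlefield is `a = γ v / (4 c₀)`, a player
paying `c₀` per unit of effective effort earns at most `v / 2 - c₀ a` there: by Bernoulli's
inequality `t ^ γ ≤ 1 + γ (t - 1)` the Tullock gain of raising effective effort beyond `a` never
covers its cost. Player 1's complete network multiplies total effective effort by `c 1 / c 0`, so
both players pay `c 0` per unit of effective effort, and in the proposed profile both have
effective effort `a` on every battlefield; hence it is an equilibrium with winning
probabilities `1 / 2`.

Conversely, in any equilibrium scaling all of player `i`'s efforts by `t > 0` is a feasible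
deviation. The first-order condition at `t = 1` reads `c i ∑ₖ eᵢᵏ = ∑ₖ γ v pₖ (1 - pₖ)`, and
`p (1 - p) ≤ 1 / 4` bounds this by `m γ v / 4`.
-/

theorem tullock_self (γ : ℝ) {a : ℝ} (ha : 0 < a) : tullock γ a a = 1 / 2 := by
  have : 0 < a ^ γ := Real.rpow_pos_of_pos ha γ
  rw [tullock]
  field_simp
  ring

/-- With `t = x / a` and `T = t ^ γ`, the left side exceeds `v / 2` by `v (T - 1) / (2 (T + 1))`,
and `2 (T - 1) / (T + 1) ≤ T - 1 ≤ γ (t - 1)`, the last step being Bernoulli's inequality. -/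
theorem mul_tullock_sub_mul_le {γ v c a x : ℝ} (hγ0 : 0 < γ) (hγ1 : γ ≤ 1) (hv : 0 < v)
    (hc : 0 < c) (ha : 4 * c * a = γ * v) (hx : 0 ≤ x) :
    v * tullock γ x a - c * x ≤ v / 2 - c * a := by
  have ha0 : 0 < a := by nlinarith
  set t := x / a
  have ht : 0 ≤ t := div_nonneg hx ha0.le
  have hxt : x = t * a := (div_mul_cancel₀ x ha0.ne').symm
  have hA : 0 < a ^ γ := Real.rpow_pos_of_pos ha0 γ
  have hT : 0 ≤ t ^ γ := Real.rpow_nonneg ht γ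
  have hbern : t ^ γ - 1 ≤ γ * (t - 1) := by
    have := rpow_one_add_le_one_add_mul_self (s := t - 1) (by linarith) hγ0.le hγ1
    rw [add_sub_cancel] at this
    linarith
  have hgain : v * tullock γ x a - v / 2 = v * (t ^ γ - 1) / (2 * (t ^ γ + 1)) := by
    rw [tullock, hxt, Real.mul_rpow ht ha0.le]
    field_simp
    ring
  have hbound : v * (t ^ γ - 1) / (2 * (t ^ γ + 1)) ≤ c * a * (t - 1) := by
    rw [show c * a = γ * v / 4 by linarith, div_le_iff₀ (by positivity)]
    nlinarith [mul_nonneg hv.le (sq_nonneg (t ^ γ - 1)),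
      mul_le_mul_of_nonneg_left (mul_le_mul_of_nonneg_right hbern (by positivity : 0 ≤ t ^ γ + 1))
        hv.le]
  have hcost : c * x = c * a * t := by rw [hxt]; ring
  linarith

theorem hasDerivAt_tullock_mul {γ y z : ℝ} (hγ : 0 < γ) (hy : 0 ≤ y) (hz : 0 ≤ z) :
    HasDerivAt (fun t => tullock γ (t * y) z)
      (γ * tullock γ y z * (1 - tullock γ y z)) 1 := by
  rcases hy.eq_or_lt with rfl | hy
  · simpa [tullock, Real.zero_rpow hγ.ne'] using hasDerivAt_const (1 : ℝ) (0 : ℝ)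
  have hY : 0 < y ^ γ := Real.rpow_pos_of_pos hy γ
  have hZ : 0 ≤ z ^ γ := Real.rpow_nonneg hz γ
  have hpow := (hasDerivAt_mul_const y).rpow_const (p := γ) (x := 1) (by simp [hy.ne'])
  refine (hpow.fun_div (hpow.add_const (z ^ γ)) (by positivity)).congr_deriv ?_
  simp only [tullock, one_mul]
  rw [Real.rpow_sub_one hy.ne']
  field_simp

section EffectiveEffort

variable {m : ℕ}

@[simp]
theorem effY_zero (x : Fin m → ℝ) (k : Fin m) : effY 0 x k = x k := by
  simp [effY]

theorem effY_smul (ρ : Matrix (Fin m) (Fin m) ℝ) (t : ℝ) (x : Fin m → ℝ) (k : Fin m) :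
    effY ρ (t • x) k = t * effY ρ x k := by
  simp only [effY, Pi.smul_apply, smul_eq_mul, mul_add, mul_sum]
  congr 1
  exact sum_congr rfl fun l _ => by ring

theorem effY_nonneg {ρ : Matrix (Fin m) (Fin m) ℝ} {x : Fin m → ℝ} (hρ : ∀ l k, 0 ≤ ρ l k)
    (hx : ∀ k, 0 ≤ x k) (k : Fin m) : 0 ≤ effY ρ x k :=
  add_nonneg (hx k) (sum_nonneg fun l _ => mul_nonneg (hρ l k) (hx l))

variable {ρ : Matrix (Fin m) (Fin m) ℝ} {θ : ℝ}

theorem effY_of_offDiag_const (hρ : ∀ l k, ρ l k = if l = k then 0 else θ) (x : Fin m → ℝ)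
    (k : Fin m) : effY ρ x k = x k + θ * (∑ l, x l - x k) := by
  rw [effY, ← sum_erase_eq_sub (mem_univ k), mul_sum]
  congr 1
  exact sum_congr rfl fun l hl => by rw [hρ, if_neg (ne_of_mem_erase hl)]

theorem sum_effY_of_offDiag_const (hρ : ∀ l k, ρ l k = if l = k then 0 else θ)
    (x : Fin m → ℝ) : ∑ k, effY ρ x k = (1 + (m - 1) * θ) * ∑ k, x k := by
  simp only [effY_of_offDiag_const hρ, sum_add_distrib, ← mul_sum, sum_sub_distrib, sum_const,
    card_univ, Fintype.card_fin, nsmul_eq_mul]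
  ring

end EffectiveEffort

theorem payoff_update_self {m : ℕ} (γ : ℝ) (v : Fin m → ℝ) (c : Fin 2 → ℝ)
    (ρ : Fin 2 → Matrix (Fin m) (Fin m) ℝ) (e : Fin 2 → Fin m → ℝ) (i : Fin 2)
    (x : Fin m → ℝ) :
    payoff γ v c ρ (Function.update e i x) i =
      ∑ k, v k * tullock γ (effY (ρ i) x k) (effY (ρ (1 - i)) (e (1 - i)) k)
        - c i * ∑ k, x k := by
  have : 1 - i ≠ i := by fin_cases i <;> decide
  rw [payoff, Function.update_self, Function.update_of_ne this]

section Equilibrium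

variable {m : ℕ} {γ : ℝ} {c : Fin 2 → ℝ} {ρ : Fin 2 → Matrix (Fin m) (Fin m) ℝ}
  {e : Fin 2 → Fin m → ℝ}

/-- First-order condition at `t = 1` for the feasible deviations `t • e i`, `t > 0`. -/
theorem IsNashEq.cost_mul_sum_eq {v : Fin m → ℝ} (h : IsNashEq γ v c ρ e) (hγ : 0 < γ)
    (hρ : ∀ i l k, 0 ≤ ρ i l k) (i : Fin 2) :
    c i * ∑ k, e i k = ∑ k, v k * (γ * eqProb γ ρ e i k * (1 - eqProb γ ρ e i k)) := by
  set F := fun t : ℝ => payoff γ v c ρ (Function.update e i (t • e i)) i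
  have hF : HasDerivAt F
      ((∑ k, v k * (γ * eqProb γ ρ e i k * (1 - eqProb γ ρ e i k))) - c i * ∑ k, e i k) 1 := by
    simp only [F, payoff_update_self, effY_smul, Pi.smul_apply, smul_eq_mul, ← mul_sum]
    refine (HasDerivAt.fun_sum fun k _ => ?_).sub ((hasDerivAt_mul_const _).const_mul (c i))
    exact (hasDerivAt_tullock_mul hγ (effY_nonneg (hρ i) (h.1 i) k)
      (effY_nonneg (hρ _) (h.1 _) k)).const_mul (v k)
  have hmax : IsLocalMax F 1 := by
    filter_upwards [Ioi_mem_nhds one_pos] with t ht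
    simpa [F] using h.2 i (t • e i) fun k => mul_nonneg ht.le (h.1 i k)
  linarith [hmax.hasDerivAt_eq_zero hF]

theorem IsNashEq.cost_mul_sum_le {v : Fin m → ℝ} (h : IsNashEq γ v c ρ e) (hγ : 0 < γ)
    (hv : ∀ k, 0 ≤ v k) (hρ : ∀ i l k, 0 ≤ ρ i l k) (i : Fin 2) :
    c i * ∑ k, e i k ≤ γ / 4 * ∑ k, v k := by
  rw [h.cost_mul_sum_eq hγ hρ, mul_sum]
  refine sum_le_sum fun k _ => ?_
  have hp := sq_nonneg (eqProb γ ρ e i k - 1 / 2)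
  nlinarith [mul_nonneg (hv k) hγ.le]

theorem isNashEq_of_effY_eq {v a c₀ : ℝ} (hγ0 : 0 < γ) (hγ1 : γ ≤ 1) (hv : 0 < v)
    (hc₀ : 0 < c₀) (ha : 4 * c₀ * a = γ * v) (he : ∀ i k, 0 ≤ e i k)
    (hρ : ∀ i l k, 0 ≤ ρ i l k)
    (hcost : ∀ i x, c₀ * ∑ k, effY (ρ i) x k = c i * ∑ k, x k)
    (hY : ∀ i k, effY (ρ i) (e i) k = a) :
    IsNashEq γ (fun _ => v) c ρ e := by
  have hpay : ∀ i x, payoff γ (fun _ => v) c ρ (Function.update e i x) i =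
      ∑ k, (v * tullock γ (effY (ρ i) x k) a - c₀ * effY (ρ i) x k) := by
    intro i x
    rw [payoff_update_self, ← hcost, sum_sub_distrib, mul_sum]
    simp only [hY]
  have ha0 : 0 < a := by nlinarith
  refine ⟨he, fun i x hx => ?_⟩
  calc payoff γ (fun _ => v) c ρ (Function.update e i x) i
      = ∑ k, (v * tullock γ (effY (ρ i) x k) a - c₀ * effY (ρ i) x k) := hpay i x
    _ ≤ ∑ _k : Fin m, (v / 2 - c₀ * a) := sum_le_sum fun k _ =>
        mul_tullock_sub_mul_le hγ0 hγ1 hv hc₀ ha (effY_nonneg (hρ i) hx k)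
    _ = payoff γ (fun _ => v) c ρ e i := by
        rw [← Function.update_eq_self i e, hpay]
        simp only [hY, tullock_self γ ha0, mul_one_div]

end Equilibrium

/-- effort-maximizing network design with equal battlefield
values: empty network for the low-cost player, complete directed network with
spillover `(c₂ - c₁)/((m-1) c₁)` for the high-cost player.  The symmetric
profile `e_i^k = γ v/(4 c_i)` is a Nash equilibrium, each winning probability
is `1/2`, total effort of player `i` is `m γ v/(4 c_i)`, and this is maximal
over all pairs of spillover networks. -/
theorem max_effort_network_design
    (m : ℕ) (hm : 2 ≤ m) (γ : ℝ) (hγ0 : 0 < γ) (hγ1 : γ ≤ 1)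
    (v : ℝ) (hv : 0 < v)
    (c : Fin 2 → ℝ) (hc0 : 0 < c 0) (hc01 : c 0 ≤ c 1)
    (ρ : Fin 2 → Matrix (Fin m) (Fin m) ℝ)
    (hρ0 : ρ 0 = 0)
    (hρ1 : ∀ l k, ρ 1 l k = if l = k then 0 else (c 1 - c 0) / (((m : ℝ) - 1) * c 0))
    (e : Fin 2 → Fin m → ℝ)
    (hedef : ∀ i k, e i k = γ * v / (4 * c i)) :
    IsNashEq γ (fun _ => v) c ρ e ∧
    (∀ (i : Fin 2) (k : Fin m), eqProb γ ρ e i k = 1 / 2) ∧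
    (∀ i : Fin 2, ∑ k, e i k = m * γ * v / (4 * c i)) ∧
    (∀ (ρ' : Fin 2 → Matrix (Fin m) (Fin m) ℝ),
      (∀ i k l, 0 ≤ ρ' i k l) → (∀ i k, ρ' i k k = 0) →
      ∀ e' : Fin 2 → Fin m → ℝ, IsNashEq γ (fun _ => v) c ρ' e' →
      ∀ i : Fin 2, ∑ k, e' i k ≤ m * γ * v / (4 * c i)) := by
  have hc1 : 0 < c 1 := hc0.trans_le hc01
  have hc : ∀ i, 0 < c i := Fin.forall_fin_two.2 ⟨hc0, hc1⟩
  have hm1 : (0 : ℝ) < m - 1 := by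
    have : (2 : ℝ) ≤ m := by exact_mod_cast hm
    linarith
  have hρ : ∀ i l k, 0 ≤ ρ i l k := by
    refine Fin.forall_fin_two.2 ⟨by simp [hρ0], fun l k => ?_⟩
    rw [hρ1]
    split_ifs
    exacts [le_rfl, div_nonneg (by linarith) (by positivity)]
  have hcost : ∀ i x, c 0 * ∑ k, effY (ρ i) x k = c i * ∑ k, x k := by
    refine Fin.forall_fin_two.2 ⟨by simp [hρ0], fun x => ?_⟩
    rw [sum_effY_of_offDiag_const hρ1]
    field_simp
    ring
  have hY : ∀ i k, effY (ρ i) (e i) k = γ * v / (4 * c 0) := by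
    refine Fin.forall_fin_two.2 ⟨by simp [hρ0, hedef], fun k => ?_⟩
    simp only [effY_of_offDiag_const hρ1, hedef, sum_const, card_univ, Fintype.card_fin,
      nsmul_eq_mul]
    field_simp
    ring
  have he : ∀ i k, 0 ≤ e i k := fun i k => by
    rw [hedef]
    have := hc i
    positivity
  refine ⟨isNashEq_of_effY_eq hγ0 hγ1 hv hc0 (by field_simp) he hρ hcost hY, fun i k => ?_,
    fun i => ?_, fun ρ' hρ' _ e' he' i => ?_⟩
  · rw [eqProb, hY, hY, tullock_self γ (by positivity)]
  · simp only [hedef, sum_const, card_univ, Fintype.card_fin, nsmul_eq_mul]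
    ring
  · have := he'.cost_mul_sum_le hγ0 (fun _ => hv.le) hρ' i
    rw [le_div_iff₀ (by linarith [hc i])]
    simp only [sum_const, card_univ, Fintype.card_fin, nsmul_eq_mul] at this
    linarith
end

section
/- Suppose v² ≥ v¹ > 0, c₂ ≥ c₁ > 0, γ > 0, and either (i) c₂/c₁ < (v¹+v²)/v² and 0 ≤ λ₁ < ((v¹+v²)/v²)·(c₁/c₂) − 1, or (ii) c₂/c₁ ≥ (v¹+v²)/v² and λ₁ > v²/v¹. Then all four of the following quantities are strictly positive: (γ/c₁)·(λ₁ v² − v¹)/(4(λ₁ − 1)); (γ/c₁)·(λ₁ v¹ − v²)/(4(λ₁ − 1)); (γ/c₂)·(c₁(v¹+v²) − c₂ v²(λ₁+1))/(4(2c₁ − c₂(λ₁+1))); and (γ/c₂)·(c₁(v¹+v²) − c₂ v¹(λ₁+1))/(4(2c₁ − c₂(λ₁+1))). -/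
/-!
Each of the four efforts is a positive factor `γ / cᵢ` times a quotient `N / (4 * D)`, so it
suffices that `N` and `D` have the same sign, i.e. `0 < N * D`. In case (i) the bound on `lam`
forces `lam < v₁ / v₂ ≤ 1`, and all numerators and denominators have a definite sign; in case (ii)
`lam > v₂ / v₁ ≥ 1` and every sign flips.
-/

lemma mul_div_four_mul_pos {x a b : ℝ} (hx : 0 < x) (hab : 0 < a * b) :
    0 < x * (a / (4 * b)) := by
  refine mul_pos hx (div_pos_iff.2 ?_)
  rcases mul_pos_iff.1 hab with ⟨ha, hb⟩ | ⟨ha, hb⟩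
  · exact .inl ⟨ha, by linarith⟩
  · exact .inr ⟨ha, by linarith⟩

section

variable {v₁ v₂ c₁ c₂ lam : ℝ}

lemma lam_mul_sub_mul_sub_one_pos (hv1 : 0 < v₁) (hv : v₁ ≤ v₂)
    (h : lam * v₂ < v₁ ∨ v₂ < lam * v₁) :
    0 < (lam * v₂ - v₁) * (lam - 1) ∧ 0 < (lam * v₁ - v₂) * (lam - 1) := by
  have hv2 : 0 < v₂ := hv1.trans_le hv
  rcases h with h | h
  · have hlam : lam < 1 := by nlinarith
    have hlam₁ : lam * v₁ < v₂ := by nlinarith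
    exact ⟨mul_pos_of_neg_of_neg (by linarith) (by linarith),
      mul_pos_of_neg_of_neg (by linarith) (by linarith)⟩
  · have hlam : 1 < lam := by nlinarith
    have hlam₂ : v₁ < lam * v₂ := by nlinarith
    exact ⟨mul_pos (by linarith) (by linarith), mul_pos (by linarith) (by linarith)⟩

lemma lam_mul_lt_of_mul_lam_add_one_lt (hv1 : 0 < v₁) (hv : v₁ ≤ v₂) (hc : c₁ ≤ c₂)
    (hc1 : 0 < c₁) (h : c₂ * v₂ * (lam + 1) < c₁ * (v₁ + v₂)) : lam * v₂ < v₁ := by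
  have hc2 : 0 < c₂ := hc1.trans_le hc
  have : c₂ * (v₂ * (lam + 1)) < c₂ * (v₁ + v₂) := by
    nlinarith [mul_le_mul_of_nonneg_right hc (by linarith : 0 ≤ v₁ + v₂)]
  linarith [lt_of_mul_lt_mul_left this hc2.le]

lemma cost_signs_of_mul_lam_add_one_lt (hv1 : 0 < v₁) (hv : v₁ ≤ v₂) (hc : c₁ ≤ c₂)
    (hc1 : 0 < c₁) (hlam : 0 ≤ lam) (h : c₂ * v₂ * (lam + 1) < c₁ * (v₁ + v₂)) :
    0 < (c₁ * (v₁ + v₂) - c₂ * v₂ * (lam + 1)) * (2 * c₁ - c₂ * (lam + 1)) ∧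
    0 < (c₁ * (v₁ + v₂) - c₂ * v₁ * (lam + 1)) * (2 * c₁ - c₂ * (lam + 1)) := by
  have hv2 : 0 < v₂ := hv1.trans_le hv
  have hc2 : 0 < c₂ := hc1.trans_le hc
  have h₁ : c₂ * v₁ * (lam + 1) < c₁ * (v₁ + v₂) := by
    nlinarith [mul_le_mul_of_nonneg_left hv (by positivity : 0 ≤ c₂ * (lam + 1))]
  have hD : 0 < 2 * c₁ - c₂ * (lam + 1) := by nlinarith
  exact ⟨mul_pos (by linarith) hD, mul_pos (by linarith) hD⟩

lemma cost_signs_of_lt_lam_mul (hv1 : 0 < v₁) (hv : v₁ ≤ v₂) (hc : c₁ ≤ c₂) (hc1 : 0 < c₁)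
    (hcost : c₁ * (v₁ + v₂) ≤ c₂ * v₂) (h : v₂ < lam * v₁) :
    0 < (c₁ * (v₁ + v₂) - c₂ * v₂ * (lam + 1)) * (2 * c₁ - c₂ * (lam + 1)) ∧
    0 < (c₁ * (v₁ + v₂) - c₂ * v₁ * (lam + 1)) * (2 * c₁ - c₂ * (lam + 1)) := by
  have hc2 : 0 < c₂ := hc1.trans_le hc
  have hlam : 1 < lam := by nlinarith
  have h₂ : c₁ * (v₁ + v₂) < c₂ * v₂ * (lam + 1) := by
    nlinarith [mul_pos (mul_pos hc2 (hv1.trans_le hv)) (by linarith : 0 < lam)]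
  have h₁ : c₁ * (v₁ + v₂) < c₂ * v₁ * (lam + 1) := by nlinarith [mul_pos hc2 hv1]
  have hD : 2 * c₁ - c₂ * (lam + 1) < 0 := by nlinarith
  exact ⟨mul_pos_of_neg_of_neg (by linarith) hD, mul_pos_of_neg_of_neg (by linarith) hD⟩

end

/-- Lemma on interior efforts, two battlefields. -/
theorem interior_efforts_two_battlefields
    (v₁ v₂ c₁ c₂ γ lam : ℝ)
    (hv : v₁ ≤ v₂) (hv1 : 0 < v₁) (hc : c₁ ≤ c₂) (hc1 : 0 < c₁) (hγ : 0 < γ)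
    (h : (c₂ / c₁ < (v₁ + v₂) / v₂ ∧
            0 ≤ lam ∧ lam < (v₁ + v₂) / v₂ * (c₁ / c₂) - 1) ∨
         ((v₁ + v₂) / v₂ ≤ c₂ / c₁ ∧ v₂ / v₁ < lam)) :
    0 < γ / c₁ * ((lam * v₂ - v₁) / (4 * (lam - 1))) ∧
    0 < γ / c₁ * ((lam * v₁ - v₂) / (4 * (lam - 1))) ∧
    0 < γ / c₂ * ((c₁ * (v₁ + v₂) - c₂ * v₂ * (lam + 1)) /
      (4 * (2 * c₁ - c₂ * (lam + 1)))) ∧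
    0 < γ / c₂ * ((c₁ * (v₁ + v₂) - c₂ * v₁ * (lam + 1)) /
      (4 * (2 * c₁ - c₂ * (lam + 1)))) := by
  have hv2 : 0 < v₂ := hv1.trans_le hv
  have hc2 : 0 < c₂ := hc1.trans_le hc
  obtain ⟨hlam, hcost⟩ : (lam * v₂ < v₁ ∨ v₂ < lam * v₁) ∧
      0 < (c₁ * (v₁ + v₂) - c₂ * v₂ * (lam + 1)) * (2 * c₁ - c₂ * (lam + 1)) ∧
      0 < (c₁ * (v₁ + v₂) - c₂ * v₁ * (lam + 1)) * (2 * c₁ - c₂ * (lam + 1)) := by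
    rcases h with ⟨-, hlam0, hlam⟩ | ⟨hcost, hlam⟩
    · rw [lt_sub_iff_add_lt, div_mul_div_comm, lt_div_iff₀ (by positivity)] at hlam
      have hsum : c₂ * v₂ * (lam + 1) < c₁ * (v₁ + v₂) := by linarith
      exact ⟨.inl (lam_mul_lt_of_mul_lam_add_one_lt hv1 hv hc hc1 hsum),
        cost_signs_of_mul_lam_add_one_lt hv1 hv hc hc1 hlam0 hsum⟩
    · rw [div_lt_iff₀ hv1] at hlam
      rw [div_le_div_iff₀ hv2 hc1, mul_comm (v₁ + v₂)] at hcost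
      exact ⟨.inr hlam, cost_signs_of_lt_lam_mul hv1 hv hc hc1 hcost hlam⟩
  obtain ⟨h₁, h₂⟩ := lam_mul_sub_mul_sub_one_pos hv1 hv hlam
  exact ⟨mul_div_four_mul_pos (div_pos hγ hc1) h₁, mul_div_four_mul_pos (div_pos hγ hc1) h₂,
    mul_div_four_mul_pos (div_pos hγ hc2) hcost.1, mul_div_four_mul_pos (div_pos hγ hc2) hcost.2⟩
end

section
/- Suppose v³ ≥ v² ≥ v¹ > 0, c₂ ≥ c₁ > 0, γ > 0, c₂/c₁ < (v³+v²+v¹)/(v³+v²−v¹), and 0 ≤ λ₁ < ((v³+v²+v¹)/(v³+v²−v¹))·(c₁/c₂) − 1. Then all six of the following quantities are strictly positive: (γ/c₁)·(2v¹ − λ₁(v³+v²−v¹))/(4(2−λ₁)); (γ/c₁)·(2v² − λ₁(v³+v¹−v²))/(4(2−λ₁)); (γ/c₁)·(2v³ − λ₁(v²+v¹−v³))/(4(2−λ₁)); (γ/c₂)·(c₁(v³+v²+v¹) − c₂(v³+v²−v¹)(λ₁+1))/(4(3c₁ − c₂(λ₁+1))); (γ/c₂)·(c₁(v³+v²+v¹)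 − c₂(v³+v¹−v²)(λ₁+1))/(4(3c₁ − c₂(λ₁+1))); and (γ/c₂)·(c₁(v³+v²+v¹) − c₂(v²+v¹−v³)(λ₁+1))/(4(3c₁ − c₂(λ₁+1))). -/
/-!
Write `T = v₁ + v₂ + v₃`. Since `λ ≥ 0`, every numerator is increasing in its own value `vᵢ`
once `T` is fixed (`v₃ + v₂ - v₁ = T - 2 v₁`, and so on), so it suffices to treat `v₁`. The
bound on `λ` says precisely that the second player's `v₁`-numerator
`c₁ T - c₂ (T - 2 v₁)(λ + 1)` is positive; with `c₁ ≤ c₂` it yields the first player's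
`v₁`-numerator `2 v₁ - λ (T - 2 v₁) > 0`. The denominators are positive because `v₁` is the
smallest value, so `v₁ ≤ T - 2 v₁` (giving `λ < 2`) and `T ≤ 3 (T - 2 v₁)` (giving
`c₂ (λ + 1) < 3 c₁`).
-/

section

variable {lam c₁ c₂ u w v S D T : ℝ}

theorem mul_mul_add_one_lt_of_lt_div_mul_div_sub_one (hD : 0 < D) (hc₂ : 0 < c₂)
    (hlam : lam < S / D * (c₁ / c₂) - 1) : c₂ * D * (lam + 1) < c₁ * S := by
  rw [lt_sub_iff_add_lt, div_mul_div_comm, lt_div_iff₀ (by positivity)] at hlam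
  linarith

theorem mul_add_one_lt_of_mul_mul_add_one_lt (hc : c₁ ≤ c₂) (hc₁ : 0 < c₁) (hS : 0 ≤ S)
    (h : c₂ * D * (lam + 1) < c₁ * S) : D * (lam + 1) < S := by
  have hc₂ : 0 < c₂ := hc₁.trans_le hc
  have : c₂ * (D * (lam + 1)) < c₂ * S :=
    calc c₂ * (D * (lam + 1)) = c₂ * D * (lam + 1) := by ring
      _ < c₁ * S := h
      _ ≤ c₂ * S := mul_le_mul_of_nonneg_right hc hS
  exact lt_of_mul_lt_mul_left this hc₂.le

theorem lt_two_of_mul_lt_two_mul (hlam : 0 ≤ lam) (hv : 0 < v) (hvD : v ≤ D)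
    (h : lam * D < 2 * v) : lam < 2 := by
  have : lam * v < 2 * v := (mul_le_mul_of_nonneg_left hvD hlam).trans_lt h
  exact lt_of_mul_lt_mul_right this hv.le

theorem mul_add_one_lt_three_mul (hD : 0 < D) (hc₁ : 0 < c₁) (hSD : S ≤ 3 * D)
    (h : c₂ * D * (lam + 1) < c₁ * S) : c₂ * (lam + 1) < 3 * c₁ := by
  have : c₂ * (lam + 1) * D < 3 * c₁ * D :=
    calc c₂ * (lam + 1) * D = c₂ * D * (lam + 1) := by ring
      _ < c₁ * S := h
      _ ≤ c₁ * (3 * D) := mul_le_mul_of_nonneg_left hSD hc₁.le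
      _ = 3 * c₁ * D := by ring
  exact lt_of_mul_lt_mul_right this hD.le

theorem two_mul_sub_mul_le_of_le (hlam : 0 ≤ lam) (huw : u ≤ w) :
    2 * u - lam * (T - 2 * u) ≤ 2 * w - lam * (T - 2 * w) := by
  gcongr

theorem mul_sub_mul_mul_le_of_le (hc₂ : 0 ≤ c₂) (hlam : 0 ≤ lam + 1) (huw : u ≤ w) :
    c₁ * T - c₂ * (T - 2 * u) * (lam + 1) ≤ c₁ * T - c₂ * (T - 2 * w) * (lam + 1) := by
  gcongr

end

theorem interior_efforts_three_battlefields_case1_general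
    (v₁ v₂ v₃ c₁ c₂ γ lam : ℝ)
    (hv21 : v₁ ≤ v₂) (hv32 : v₂ ≤ v₃) (hv1 : 0 < v₁)
    (hc : c₁ ≤ c₂) (hc1 : 0 < c₁) (hγ : 0 < γ)
    (hlam0 : 0 ≤ lam)
    (hlam : lam < (v₃ + v₂ + v₁) / (v₃ + v₂ - v₁) * (c₁ / c₂) - 1) :
    0 < γ / c₁ * ((2 * v₁ - lam * (v₃ + v₂ - v₁)) / (4 * (2 - lam))) ∧
    0 < γ / c₁ * ((2 * v₂ - lam * (v₃ + v₁ - v₂)) / (4 * (2 - lam))) ∧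
    0 < γ / c₁ * ((2 * v₃ - lam * (v₂ + v₁ - v₃)) / (4 * (2 - lam))) ∧
    0 < γ / c₂ * ((c₁ * (v₃ + v₂ + v₁) - c₂ * (v₃ + v₂ - v₁) * (lam + 1)) /
      (4 * (3 * c₁ - c₂ * (lam + 1)))) ∧
    0 < γ / c₂ * ((c₁ * (v₃ + v₂ + v₁) - c₂ * (v₃ + v₁ - v₂) * (lam + 1)) /
      (4 * (3 * c₁ - c₂ * (lam + 1)))) ∧
    0 < γ / c₂ * ((c₁ * (v₃ + v₂ + v₁) - c₂ * (v₂ + v₁ - v₃) * (lam + 1)) /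
      (4 * (3 * c₁ - c₂ * (lam + 1)))) := by
  have hc2 : 0 < c₂ := hc1.trans_le hc
  have hD : 0 < v₃ + v₂ - v₁ := by linarith
  have hlamD := mul_mul_add_one_lt_of_lt_div_mul_div_sub_one hD hc2 hlam
  have hnum₁ : 0 < 2 * v₁ - lam * (v₃ + v₂ - v₁) := by
    linarith [mul_add_one_lt_of_mul_mul_add_one_lt hc hc1 (by linarith) hlamD]
  have hden₁ : 0 < 4 * (2 - lam) := by
    linarith [lt_two_of_mul_lt_two_mul hlam0 hv1 (by linarith) (sub_pos.mp hnum₁)]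
  have hden₂ : 0 < 4 * (3 * c₁ - c₂ * (lam + 1)) := by
    linarith [mul_add_one_lt_three_mul hD hc1 (by linarith) hlamD]
  have mono₁ {u w : ℝ} (huw : u ≤ w) := two_mul_sub_mul_le_of_le (T := v₁ + v₂ + v₃) hlam0 huw
  have mono₂ {u w : ℝ} (huw : u ≤ w) :=
    mul_sub_mul_mul_le_of_le (c₁ := c₁) (T := v₁ + v₂ + v₃) hc2.le
      (by linarith : 0 ≤ lam + 1) huw
  refine ⟨?_, ?_, ?_, ?_, ?_, ?_⟩
  · exact mul_pos (div_pos hγ hc1) (div_pos hnum₁ hden₁)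
  · exact mul_pos (div_pos hγ hc1) (div_pos (by linarith [mono₁ hv21]) hden₁)
  · exact mul_pos (div_pos hγ hc1) (div_pos (by linarith [mono₁ (hv21.trans hv32)]) hden₁)
  · exact mul_pos (div_pos hγ hc2) (div_pos (by linarith) hden₂)
  · exact mul_pos (div_pos hγ hc2) (div_pos (by linarith [mono₂ hv21]) hden₂)
  · exact mul_pos (div_pos hγ hc2) (div_pos (by linarith [mono₂ (hv21.trans hv32)]) hden₂)

/-- Lemma on interior efforts, three battlefields, first case. -/
theorem interior_efforts_three_battlefields_case1
    (v₁ v₂ v₃ c₁ c₂ γ lam : ℝ)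
    (hv21 : v₁ ≤ v₂) (hv32 : v₂ ≤ v₃) (hv1 : 0 < v₁)
    (hc : c₁ ≤ c₂) (hc1 : 0 < c₁) (hγ : 0 < γ)
    (hcase : c₂ / c₁ < (v₃ + v₂ + v₁) / (v₃ + v₂ - v₁))
    (hlam0 : 0 ≤ lam)
    (hlam : lam < (v₃ + v₂ + v₁) / (v₃ + v₂ - v₁) * (c₁ / c₂) - 1) :
    0 < γ / c₁ * ((2 * v₁ - lam * (v₃ + v₂ - v₁)) / (4 * (2 - lam))) ∧
    0 < γ / c₁ * ((2 * v₂ - lam * (v₃ + v₁ - v₂)) / (4 * (2 - lam))) ∧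
    0 < γ / c₁ * ((2 * v₃ - lam * (v₂ + v₁ - v₃)) / (4 * (2 - lam))) ∧
    0 < γ / c₂ * ((c₁ * (v₃ + v₂ + v₁) - c₂ * (v₃ + v₂ - v₁) * (lam + 1)) /
      (4 * (3 * c₁ - c₂ * (lam + 1)))) ∧
    0 < γ / c₂ * ((c₁ * (v₃ + v₂ + v₁) - c₂ * (v₃ + v₁ - v₂) * (lam + 1)) /
      (4 * (3 * c₁ - c₂ * (lam + 1)))) ∧
    0 < γ / c₂ * ((c₁ * (v₃ + v₂ + v₁) - c₂ * (v₂ + v₁ - v₃) * (lam + 1)) /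
      (4 * (3 * c₁ - c₂ * (lam + 1)))) :=
  interior_efforts_three_battlefields_case1_general v₁ v₂ v₃ c₁ c₂ γ lam hv21 hv32 hv1 hc hc1 hγ
    hlam0 hlam
end
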